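/- With x_{0,·} = r/(β₁+1), x_{1,·} = (β₁/(α₁+β₁+1))·(r/(β₁+1) + (1-r)/β₁), and x_{w₁,·} = Γ(w₁+β₁/α₁)/Γ(β₁/α₁) · Γ(1+(β₁+1)/α₁)/Γ(w₁+1+(β₁+1)/α₁) · (1-r+β₁)/(β₁(β₁+1)) for w₁ > 1, we have ∑_{w₁=0}^∞ x_{w₁,·} = 1. -/

import Mathlib

/-!
With `c = β₁ / α₁` and `δ = 1 / α₁`, the terms with `w ≥ 2` are constant multiples of
`Γ(w + c) / Γ(w + 1 + c + δ)`, and these telescope: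
`Γ(y) / Γ(y + δ) - Γ(y + 1) / Γ(y + 1 + δ) = δ Γ(y) / Γ(y + 1 + δ)`.
Log-convexity of `Γ` gives `Γ(y) (y - 1)^δ ≤ Γ(y + δ)`, so `Γ(y) / Γ(y + δ) → 0` and the tail
sums to its first telescoping term, an explicit rational function of `α₁, β₁, r` that
complements `x 0 + x 1` to `1`.
-/

open Real Filter Topology

lemma Real.Gamma_mul_rpow_le_Gamma_add {x δ : ℝ} (hx : 1 < x) (hδ : 0 < δ) :
    Gamma x * (x - 1) ^ δ ≤ Gamma (x + δ) := by
  have hx1 : 0 < x - 1 := by linarith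
  have hΓx : 0 < Gamma x := Gamma_pos_of_pos (by linarith)
  have hrec : Gamma x = (x - 1) * Gamma (x - 1) := by
    simpa using Gamma_add_one hx1.ne'
  have hslope := convexOn_log_Gamma.slope_mono_adjacent (x := x - 1) (y := x) (z := x + δ)
    (Set.mem_Ioi.2 hx1) (Set.mem_Ioi.2 (by linarith)) (by linarith) (by linarith)
  have hstep : log (Gamma x) - log (Gamma (x - 1)) = log (x - 1) := by
    rw [hrec, log_mul hx1.ne' (Gamma_pos_of_pos hx1).ne']; ring
  simp only [Function.comp_apply, hstep, sub_sub_cancel, div_one, add_sub_cancel_left] at hslope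
  rw [le_div_iff₀ hδ] at hslope
  rw [← log_le_log_iff (by positivity) (Gamma_pos_of_pos (by linarith)),
    log_mul hΓx.ne' (by positivity), log_rpow hx1]
  linarith

lemma Real.tendsto_Gamma_div_Gamma_add_atTop {δ : ℝ} (hδ : 0 < δ) :
    Tendsto (fun x => Gamma x / Gamma (x + δ)) atTop (𝓝 0) := by
  have hbound : Tendsto (fun x : ℝ => (x - 1) ^ (-δ)) atTop (𝓝 0) :=
    (tendsto_rpow_neg_atTop hδ).comp (tendsto_atTop_add_const_right _ (-1) tendsto_id)
  refine squeeze_zero' ?_ ?_ hbound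
  · filter_upwards [eventually_gt_atTop 0] with x hx
    exact div_nonneg (Gamma_pos_of_pos hx).le (Gamma_pos_of_pos (by linarith)).le
  · filter_upwards [eventually_gt_atTop 1] with x hx
    rw [rpow_neg (by linarith), div_le_iff₀ (Gamma_pos_of_pos (by linarith)),
      ← div_eq_inv_mul, le_div_iff₀ (rpow_pos_of_pos (by linarith) δ)]
    exact Gamma_mul_rpow_le_Gamma_add hx hδ

lemma Real.Gamma_div_Gamma_add_sub_succ {y δ : ℝ} (hy : 0 < y) (hyδ : 0 < y + δ) :
    Gamma y / Gamma (y + δ) - Gamma (y + 1) / Gamma (y + 1 + δ) =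
      δ * (Gamma y / Gamma (y + 1 + δ)) := by
  have hΓ : Gamma (y + δ) ≠ 0 := (Gamma_pos_of_pos hyδ).ne'
  rw [Gamma_add_one hy.ne', add_right_comm, Gamma_add_one hyδ.ne']
  field_simp
  ring

lemma hasSum_sub_succ_of_antitone {f : ℕ → ℝ} {l : ℝ} (hf : Antitone f)
    (hl : Tendsto f atTop (𝓝 l)) : HasSum (fun n => f n - f (n + 1)) (f 0 - l) := by
  rw [hasSum_iff_tendsto_nat_of_nonneg (fun n => sub_nonneg.2 (hf n.le_succ))]
  simpa only [Finset.sum_range_sub'] using tendsto_const_nhds.sub hl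

lemma Real.hasSum_Gamma_div_Gamma_add_succ {c δ : ℝ} (hc : 0 < c) (hδ : 0 < δ) :
    HasSum (fun n : ℕ => Gamma (n + c) / Gamma (n + 1 + c + δ))
      (Gamma c / (δ * Gamma (c + δ))) := by
  set g : ℕ → ℝ := fun n => Gamma (n + c) / Gamma (n + c + δ)
  have hdiff (n : ℕ) : g n - g (n + 1) = δ * (Gamma (n + c) / Gamma (n + 1 + c + δ)) := by
    simpa only [g, Nat.cast_add_one, add_right_comm _ (1 : ℝ)] using
      Gamma_div_Gamma_add_sub_succ (by positivity : 0 < (n : ℝ) + c) (by positivity)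
  have hg : Antitone g := antitone_nat_of_succ_le fun n => by
    have hterm : 0 ≤ Gamma (n + c) / Gamma (n + 1 + c + δ) :=
      div_nonneg (Gamma_pos_of_pos (by positivity)).le (Gamma_pos_of_pos (by positivity)).le
    linarith [hdiff n, mul_nonneg hδ.le hterm]
  have hlim : Tendsto g atTop (𝓝 0) := by
    have := (tendsto_Gamma_div_Gamma_add_atTop hδ).comp
      (tendsto_atTop_add_const_right _ c tendsto_natCast_atTop_atTop)
    simpa only [Function.comp_def, g, add_assoc] using this
  have := (hasSum_sub_succ_of_antitone hg hlim).div_const δ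
  simp only [hdiff, mul_div_cancel_left₀ _ hδ.ne', g] at this
  simpa only [Nat.cast_zero, zero_add, sub_zero, div_div, mul_comm] using this

theorem marginal_sums_to_one_general (α₁ β₁ r : ℝ) (hα₁ : 0 < α₁) (hβ₁ : 0 < β₁)
    (x : ℕ → ℝ)
    (hx0 : x 0 = r / (β₁ + 1))
    (hx1 : x 1 = (β₁ / (α₁ + β₁ + 1)) * (r / (β₁ + 1) + (1 - r) / β₁))
    (hx : ∀ w : ℕ, 1 < w →
      x w = Real.Gamma ((w : ℝ) + β₁ / α₁) / Real.Gamma (β₁ / α₁) *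
        (Real.Gamma (1 + (β₁ + 1) / α₁) / Real.Gamma ((w : ℝ) + 1 + (β₁ + 1) / α₁)) *
        ((1 - r + β₁) / (β₁ * (β₁ + 1)))) :
    HasSum x 1 := by
  set c := β₁ / α₁ with hc_def
  set δ := 1 / α₁ with hδ_def
  have hc : 0 < c := by positivity
  have hδ : 0 < δ := by positivity
  have hd : (β₁ + 1) / α₁ = c + δ := add_div _ _ _
  set K := Gamma (1 + (c + δ)) / Gamma c * ((1 - r + β₁) / (β₁ * (β₁ + 1))) with hK
  have hshift : (fun n : ℕ => x (n + 2)) =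
      fun n : ℕ => K * (Gamma (n + (2 + c)) / Gamma (n + 1 + (2 + c) + δ)) := by
    funext n
    rw [hx (n + 2) (by omega), hd, hK]
    push_cast
    ring_nf
  have hsum : K * (Gamma (2 + c) / (δ * Gamma (2 + c + δ))) =
      1 - ∑ i ∈ Finset.range 2, x i := by
    have h2c : Gamma (2 + c) = (1 + c) * c * Gamma c := by
      rw [show 2 + c = c + 1 + 1 by ring, Gamma_add_one (by positivity), Gamma_add_one hc.ne']
      ring
    have h2d : Gamma (2 + c + δ) = (1 + (c + δ)) * Gamma (1 + (c + δ)) := by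
      rw [show 2 + c + δ = 1 + (c + δ) + 1 by ring, Gamma_add_one (by positivity)]
    rw [Finset.sum_range_succ, Finset.sum_range_one, hx0, hx1, h2c, h2d, hK, hc_def, hδ_def]
    have hΓc := (Gamma_pos_of_pos (by positivity : 0 < β₁ / α₁)).ne'
    have hΓd := (Gamma_pos_of_pos (by positivity : 0 < 1 + (β₁ / α₁ + 1 / α₁))).ne'
    field_simp
    ring
  rw [← hasSum_nat_add_iff' 2, hshift, ← hsum]
  exact (hasSum_Gamma_div_Gamma_add_succ (by positivity) hδ).mul_left K

theorem marginal_sums_to_one (α₁ β₁ r : ℝ) (hα₁ : 0 < α₁) (hβ₁ : 0 < β₁)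
    (hr0 : 0 < r) (hr1 : r < 1) (x : ℕ → ℝ)
    (hx0 : x 0 = r / (β₁ + 1))
    (hx1 : x 1 = (β₁ / (α₁ + β₁ + 1)) * (r / (β₁ + 1) + (1 - r) / β₁))
    (hx : ∀ w : ℕ, 1 < w →
      x w = Real.Gamma ((w : ℝ) + β₁ / α₁) / Real.Gamma (β₁ / α₁) *
        (Real.Gamma (1 + (β₁ + 1) / α₁) / Real.Gamma ((w : ℝ) + 1 + (β₁ + 1) / α₁)) *
        ((1 - r + β₁) / (β₁ * (β₁ + 1)))) :
    HasSum x 1 :=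
  marginal_sums_to_one_general α₁ β₁ r hα₁ hβ₁ x hx0 hx1 hx
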